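/- Let C be a closed braided monoidal category and A, B semigroups with B non-degenerate, such that the multiplier monoids M(A) and M(B) exist. Then for any dense and multiplicative morphism g : A → M(B) there is a unique monoid morphism g̃ : M(A) → M(B) with g̃∘i = g, where i : A → M(A) is the canonical map. -/

import Mathlib

open CategoryTheory Category MonoidalCategory Limits

universe v u

variable {C : Type u} [Category.{v} C] [MonoidalCategory C]

/-- A semigroup multiplication is non-degenerate. -/
def NonDeg (A : C) (m : A ⊗ A ⟶ A) : Prop :=
  (∀ X Y : C, Function.Injective (fun f : X ⟶ Y ⊗ A =>
      (f ▷ A) ≫ (α_ Y A A).hom ≫ (Y ◁ m))) ∧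
  (∀ X Y : C, Function.Injective (fun g : X ⟶ A ⊗ Y =>
      (A ◁ g) ≫ (α_ A A Y).inv ≫ (m ▷ Y)))

/-- Associativity of a semigroup multiplication. -/
def SgAssoc (A : C) (m : A ⊗ A ⟶ A) : Prop :=
  (m ▷ A) ≫ m = (α_ A A A).hom ≫ (A ◁ m) ≫ m

/-- A pair (f₁, f₂) is an `𝕄`-morphism `A ⇸ B`: eq. (2). -/
def IsMMor {A B : C} (mB : B ⊗ B ⟶ B) (f₁ : A ⊗ B ⟶ B) (f₂ : B ⊗ A ⟶ B) : Prop :=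
  (f₂ ▷ B) ≫ mB = (α_ B A B).hom ≫ (B ◁ f₁) ≫ mB

/-- The first component of an `𝕄`-morphism is multiplicative. -/
def Mult₁ {A B : C} (mA : A ⊗ A ⟶ A) (f₁ : A ⊗ B ⟶ B) : Prop :=
  (mA ▷ B) ≫ f₁ = (α_ A A B).hom ≫ (A ◁ f₁) ≫ f₁

/-- The second component of an `𝕄`-morphism is multiplicative. -/
def Mult₂ {A B : C} (mA : A ⊗ A ⟶ A) (f₂ : B ⊗ A ⟶ B) : Prop :=
  (α_ B A A).hom ≫ (B ◁ mA) ≫ f₂ = (f₂ ▷ A) ≫ f₂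

/-- The standing assumptions on the class `Q` of regular epimorphisms. -/
structure QData (C : Type u) [Category.{v} C] [MonoidalCategory C] where
  Q : MorphismProperty C
  regEpi : ∀ ⦃X Y : C⦄ (f : X ⟶ Y), Q f → Nonempty (RegularEpi f)
  comp_mem : ∀ ⦃X Y Z : C⦄ (f : X ⟶ Y) (g : Y ⟶ Z), Q f → Q g → Q (f ≫ g)
  tensor_mem : ∀ ⦃X Y X' Y' : C⦄ (f : X ⟶ Y) (g : X' ⟶ Y'), Q f → Q g → Q (f ⊗ₘ g)
  iso_mem : ∀ ⦃X Y : C⦄ (f : X ⟶ Y), IsIso f → Q f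
  cancel : ∀ ⦃X Y Z : C⦄ (s : X ⟶ Y) (t : Y ⟶ Z), Q s → Q (s ≫ t) → Q t
  coeq : ∀ ⦃X Y : C⦄ (f : X ⟶ Y), Q f →
    ∃ (Z : C) (u v : Z ⟶ X) (h : u ≫ f = v ≫ f),
      Nonempty (IsColimit (Cofork.ofπ f h)) ∧
      (∀ W : C, Nonempty (IsColimit (Cofork.ofπ (f := W ◁ u) (g := W ◁ v) (W ◁ f)
        (by rw [← MonoidalCategory.whiskerLeft_comp, ← MonoidalCategory.whiskerLeft_comp, h])))) ∧
      (∀ W : C, Nonempty (IsColimit (Cofork.ofπ (f := u ▷ W) (g := v ▷ W) (f ▷ W)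
        (by rw [← MonoidalCategory.comp_whiskerRight, ← MonoidalCategory.comp_whiskerRight, h]))))

/-- The multiplier monoid `𝕄(A)` of a non-degenerate semigroup `A`, presented by its
universal property: morphisms `X ⟶ 𝕄(A)` correspond bijectively to `𝕄`-morphisms
`X ⇸ A` (Paragraph 2.7, via the pullback of `φ` and `ψ`). -/
structure MultiplierMonoid {C : Type u} [Category.{v} C] [MonoidalCategory C]
    (A : C) (m : A ⊗ A ⟶ A) where
  M : C
  e₁ : M ⊗ A ⟶ A
  e₂ : A ⊗ M ⟶ A
  compat : IsMMor m e₁ e₂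
  lift : ∀ {X : C} (f₁ : X ⊗ A ⟶ A) (f₂ : A ⊗ X ⟶ A), IsMMor m f₁ f₂ →
      ∃! f : X ⟶ M, f₁ = (f ▷ A) ≫ e₁ ∧ f₂ = (A ◁ f) ≫ e₂

/-!
Write `y · a`, `a · y` for the actions of `𝕄(A)` on `A`, and likewise for `𝕄(B)`. The
extension `g̃` is forced on the dense images of `(a, b) ↦ g(a) · b` and `(b, a) ↦ b · g(a)`:
`g̃(y) · (g(a) · b) = g(y · a) · b` and `(b · g(a)) · g̃(y) = b · g(a · y)`. The identity
`(b' · g(a')) (g(y · a) · b) = (b' · g(a' · y)) (g(a) · b)` in `B`, together with the coequalizer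
property of dense morphisms and non-degeneracy of `B`, shows that these formulas define an
`𝕄`-morphism `𝕄(A) ⇸ B`, i.e. a morphism `g̃ : 𝕄(A) ⟶ 𝕄(B)` with `g(a) g̃(y) = g(a · y)`.
Since left and right multiplication by the dense `g` can be cancelled in `𝕄(B)`, this equation
makes `g̃` a monoid morphism extending `g`, and pins it down. Any monoid morphism `s` extending
`g` satisfies it too: `i(a) y i(a') = i(a · y) i(a')` in `𝕄(A)`, so
`g(a) s(y) g(a') = g(a · y) g(a')`, and `g(a')` cancels.
-/

namespace NonDeg
variable {B : C} {m : B ⊗ B ⟶ B}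

lemma eq_of_whiskerRight_mul (hnd : NonDeg B m) {X : C} {p q : X ⟶ B}
    (h : (p ▷ B) ≫ m = (q ▷ B) ≫ m) : p = q := by
  have key : ∀ r : X ⟶ B, ((r ≫ (λ_ B).inv) ▷ B) ≫ (α_ (𝟙_ C) B B).hom ≫ (𝟙_ C ◁ m)
      = (r ▷ B) ≫ m ≫ (λ_ B).inv := by
    intro r; simp
  simpa using hnd.1 X (𝟙_ C) (a₁ := p ≫ (λ_ B).inv) (a₂ := q ≫ (λ_ B).inv)
    (by simp only [key, reassoc_of% h])

lemma eq_of_whiskerLeft_mul (hnd : NonDeg B m) {X : C} {p q : X ⟶ B}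
    (h : (B ◁ p) ≫ m = (B ◁ q) ≫ m) : p = q := by
  have key : ∀ r : X ⟶ B, (B ◁ (r ≫ (ρ_ B).inv)) ≫ (α_ B B (𝟙_ C)).inv ≫ (m ▷ 𝟙_ C)
      = (B ◁ r) ≫ m ≫ (ρ_ B).inv := by
    intro r; simp
  simpa using hnd.2 X (𝟙_ C) (a₁ := p ≫ (ρ_ B).inv) (a₂ := q ≫ (ρ_ B).inv)
    (by simp only [key, reassoc_of% h])

end NonDeg

lemma IsMMor.whiskerLeft_comp {A B : C} {m : B ⊗ B ⟶ B} {f₁ : A ⊗ B ⟶ B} {f₂ : B ⊗ A ⟶ B}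
    (h : IsMMor m f₁ f₂) : (B ◁ f₁) ≫ m = (α_ B A B).inv ≫ (f₂ ▷ B) ≫ m := by
  rw [h]; simp

namespace QData
variable (QD : QData C)

lemma epi {X Y : C} {f : X ⟶ Y} (hf : QD.Q f) : Epi f :=
  RegularEpi.epi f (QD.regEpi f hf).some

lemma whiskerLeft_mem (W : C) {X Y : C} {f : X ⟶ Y} (hf : QD.Q f) : QD.Q (W ◁ f) := by
  simpa using QD.tensor_mem (𝟙 W) f (QD.iso_mem _ inferInstance) hf

lemma whiskerRight_mem {X Y : C} {f : X ⟶ Y} (hf : QD.Q f) (W : C) : QD.Q (f ▷ W) := by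
  simpa using QD.tensor_mem f (𝟙 W) hf (QD.iso_mem _ inferInstance)

lemma exists_whiskerLeft_comp_eq {X Y : C} {f : X ⟶ Y} (hf : QD.Q f) (W : C) {T : C}
    (t : W ⊗ X ⟶ T)
    (H : ∀ {Z : C} (u v : Z ⟶ X), u ≫ f = v ≫ f → (W ◁ u) ≫ t = (W ◁ v) ≫ t) :
    ∃ t' : W ⊗ Y ⟶ T, (W ◁ f) ≫ t' = t := by
  obtain ⟨Z, u, v, h, -, hl, -⟩ := QD.coeq f hf
  obtain ⟨hc⟩ := hl W
  exact ⟨hc.desc (Cofork.ofπ t (H u v h)), Cofork.IsColimit.π_desc' hc _ _⟩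

lemma exists_whiskerRight_comp_eq {X Y : C} {f : X ⟶ Y} (hf : QD.Q f) (W : C) {T : C}
    (t : X ⊗ W ⟶ T)
    (H : ∀ {Z : C} (u v : Z ⟶ X), u ≫ f = v ≫ f → (u ▷ W) ≫ t = (v ▷ W) ≫ t) :
    ∃ t' : Y ⊗ W ⟶ T, (f ▷ W) ≫ t' = t := by
  obtain ⟨Z, u, v, h, -, -, hr⟩ := QD.coeq f hf
  obtain ⟨hc⟩ := hr W
  exact ⟨hc.desc (Cofork.ofπ t (H u v h)), Cofork.IsColimit.π_desc' hc _ _⟩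

end QData

theorem exists_isMMor_of_dense (QD : QData C) {B : C} {m : B ⊗ B ⟶ B} (hnd : NonDeg B m)
    {P Q X : C} {p : P ⟶ B} {q : Q ⟶ B} (hp : QD.Q p) (hq : QD.Q q)
    {L : X ⊗ Q ⟶ B} {R : P ⊗ X ⟶ B}
    (h : (p ⊗ₘ L) ≫ m = (α_ P X Q).inv ≫ (R ⊗ₘ q) ≫ m) :
    ∃ (f₁ : X ⊗ B ⟶ B) (f₂ : B ⊗ X ⟶ B),
      (X ◁ q) ≫ f₁ = L ∧ (p ▷ X) ≫ f₂ = R ∧ IsMMor m f₁ f₂ := by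
  have h' : (R ⊗ₘ q) ≫ m = (α_ P X Q).hom ≫ (p ⊗ₘ L) ≫ m := ((Iso.eq_inv_comp _).1 h).symm
  have hL : ∀ {Z : C} (w : Z ⟶ Q), (p ▷ (X ⊗ Z)) ≫ (B ◁ ((X ◁ w) ≫ L)) ≫ m
      = (α_ P X Z).inv ≫ (R ⊗ₘ (w ≫ q)) ≫ m := by
    intro Z w
    rw [MonoidalCategory.whiskerLeft_comp, assoc, ← whisker_exchange_assoc,
      ← tensorHom_def_assoc, h, associator_inv_naturality_right_assoc,
      whiskerLeft_comp_tensorHom_assoc]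
  have hR : ∀ {Z : C} (w : Z ⟶ P), ((Z ⊗ X) ◁ q) ≫ (((w ▷ X) ≫ R) ▷ B) ≫ m
      = (α_ Z X Q).hom ≫ ((w ≫ p) ⊗ₘ L) ≫ m := by
    intro Z w
    rw [comp_whiskerRight, assoc, whisker_exchange_assoc, ← tensorHom_def'_assoc, h',
      associator_naturality_left_assoc, whiskerRight_comp_tensorHom_assoc]
  obtain ⟨f₁, hf₁⟩ := QD.exists_whiskerLeft_comp_eq hq X L fun {Z} u v huv => by
    refine hnd.eq_of_whiskerLeft_mul ?_
    have := QD.epi (QD.whiskerRight_mem hp (X ⊗ Z))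
    rw [← cancel_epi (p ▷ (X ⊗ Z)), hL, hL, huv]
  obtain ⟨f₂, hf₂⟩ := QD.exists_whiskerRight_comp_eq hp X R fun {Z} u v huv => by
    refine hnd.eq_of_whiskerRight_mul ?_
    have := QD.epi (QD.whiskerLeft_mem (Z ⊗ X) hq)
    rw [← cancel_epi ((Z ⊗ X) ◁ q), hR, hR, huv]
  refine ⟨f₁, f₂, hf₁, hf₂, ?_⟩
  have := QD.epi (QD.tensor_mem _ _ (QD.whiskerRight_mem hp X) hq)
  rw [IsMMor, ← cancel_epi ((p ▷ X) ⊗ₘ q), tensorHom_comp_whiskerRight_assoc, hf₂, h',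
    ← tensorHom_id, associator_naturality_assoc, id_tensorHom, tensorHom_comp_whiskerLeft_assoc,
    hf₁]

namespace MultiplierMonoid

section
variable {B : C} {m : B ⊗ B ⟶ B} (MB : MultiplierMonoid B m) {mM : MB.M ⊗ MB.M ⟶ MB.M}

lemma isMMor_comp {X : C} (f : X ⟶ MB.M) :
    IsMMor m ((f ▷ B) ≫ MB.e₁) ((B ◁ f) ≫ MB.e₂) := by
  rw [IsMMor, comp_whiskerRight_assoc, MB.compat, associator_naturality_middle_assoc,
    ← MonoidalCategory.whiskerLeft_comp_assoc]

lemma hom_ext {X : C} {f f' : X ⟶ MB.M} (h₁ : (f ▷ B) ≫ MB.e₁ = (f' ▷ B) ≫ MB.e₁)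
    (h₂ : (B ◁ f) ≫ MB.e₂ = (B ◁ f') ≫ MB.e₂) : f = f' :=
  (MB.lift _ _ (MB.isMMor_comp f)).unique ⟨rfl, rfl⟩ ⟨h₁, h₂⟩

lemma hom_ext_of_e₁ (hnd : NonDeg B m) {X : C} {f f' : X ⟶ MB.M}
    (h₁ : (f ▷ B) ≫ MB.e₁ = (f' ▷ B) ≫ MB.e₁) : f = f' :=
  MB.hom_ext h₁ <| hnd.eq_of_whiskerRight_mul <| by
    rw [MB.isMMor_comp f, MB.isMMor_comp f', h₁]

lemma hom_ext_of_e₂ (hnd : NonDeg B m) {X : C} {f f' : X ⟶ MB.M}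
    (h₂ : (B ◁ f) ≫ MB.e₂ = (B ◁ f') ≫ MB.e₂) : f = f' :=
  MB.hom_ext (hnd.eq_of_whiskerLeft_mul <| by
    rw [(MB.isMMor_comp f).whiskerLeft_comp, (MB.isMMor_comp f').whiskerLeft_comp, h₂]) h₂

lemma whiskerLeft_tensorHom_mul_e₂
    (h₂ : (B ◁ mM) ≫ MB.e₂ = (α_ B MB.M MB.M).inv ≫ (MB.e₂ ▷ MB.M) ≫ MB.e₂)
    {X Y : C} (x : X ⟶ MB.M) (y : Y ⟶ MB.M) :
    (B ◁ ((x ⊗ₘ y) ≫ mM)) ≫ MB.e₂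
      = (α_ B X Y).inv ≫ (((B ◁ x) ≫ MB.e₂) ▷ Y) ≫ (B ◁ y) ≫ MB.e₂ := by
  rw [MonoidalCategory.tensorHom_def, MonoidalCategory.whiskerLeft_comp,
    MonoidalCategory.whiskerLeft_comp, assoc, assoc, h₂,
    associator_inv_naturality_right_assoc, whisker_exchange_assoc,
    associator_inv_naturality_middle_assoc, ← comp_whiskerRight_assoc]

lemma whiskerRight_tensorHom_mul_e₁
    (h₁ : (mM ▷ B) ≫ MB.e₁ = (α_ MB.M MB.M B).hom ≫ (MB.M ◁ MB.e₁) ≫ MB.e₁)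
    {X Y : C} (x : X ⟶ MB.M) (y : Y ⟶ MB.M) :
    (((x ⊗ₘ y) ≫ mM) ▷ B) ≫ MB.e₁
      = (α_ X Y B).hom ≫ (X ◁ ((y ▷ B) ≫ MB.e₁)) ≫ (x ▷ B) ≫ MB.e₁ := by
  rw [tensorHom_def', comp_whiskerRight, comp_whiskerRight, assoc, assoc, h₁,
    associator_naturality_left_assoc, ← whisker_exchange_assoc,
    associator_naturality_middle_assoc, ← MonoidalCategory.whiskerLeft_comp_assoc]

lemma sgAssoc (hnd : NonDeg B m)
    (h₂ : (B ◁ mM) ≫ MB.e₂ = (α_ B MB.M MB.M).inv ≫ (MB.e₂ ▷ MB.M) ≫ MB.e₂) :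
    SgAssoc MB.M mM := by
  refine MB.hom_ext_of_e₂ hnd ?_
  simp only [MonoidalCategory.whiskerLeft_comp, assoc, h₂]
  rw [associator_inv_naturality_middle_assoc, ← comp_whiskerRight_assoc, h₂,
    associator_inv_naturality_right_assoc, whisker_exchange_assoc, h₂]
  monoidal

lemma whiskerLeft_unit_mul (hnd : NonDeg B m) {u : 𝟙_ C ⟶ MB.M}
    (h₂ : (B ◁ mM) ≫ MB.e₂ = (α_ B MB.M MB.M).inv ≫ (MB.e₂ ▷ MB.M) ≫ MB.e₂)
    (hu : (ρ_ B).inv ≫ (B ◁ u) ≫ MB.e₂ = 𝟙 B) : (MB.M ◁ u) ≫ mM = (ρ_ MB.M).hom := by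
  refine MB.hom_ext_of_e₂ hnd ?_
  have hu' : (B ◁ u) ≫ MB.e₂ = (ρ_ B).hom := by simpa using (Iso.inv_comp_eq _).1 hu
  rw [MonoidalCategory.whiskerLeft_comp_assoc, h₂, associator_inv_naturality_right_assoc,
    whisker_exchange_assoc, hu', rightUnitor_naturality]
  monoidal

lemma e₂_tensor_e₁_mul
    (h₂ : (B ◁ mM) ≫ MB.e₂ = (α_ B MB.M MB.M).inv ≫ (MB.e₂ ▷ MB.M) ≫ MB.e₂)
    {U V : C} (u : U ⟶ MB.M) (v : V ⟶ MB.M) :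
    (((B ◁ u) ≫ MB.e₂) ⊗ₘ ((v ▷ B) ≫ MB.e₁)) ≫ m
      = (α_ (B ⊗ U) V B).inv ≫ ((α_ B U V).hom ▷ B)
        ≫ (((B ◁ ((u ⊗ₘ v) ≫ mM)) ≫ MB.e₂) ▷ B) ≫ m := by
  rw [MB.whiskerLeft_tensorHom_mul_e₂ h₂, comp_whiskerRight, comp_whiskerRight, assoc, assoc,
    MB.isMMor_comp v, associator_naturality_left_assoc, MonoidalCategory.tensorHom_def, assoc]
  monoidal

end

section Semigroup
variable {A : C} {m : A ⊗ A ⟶ A} (MA : MultiplierMonoid A m)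

lemma tensorHom_e₁_comp_mul {N : C} {mN : N ⊗ N ⟶ N} {φ : A ⟶ N}
    (hφ : m ≫ φ = (φ ⊗ₘ φ) ≫ mN) :
    (φ ⊗ₘ (MA.e₁ ≫ φ)) ≫ mN = (α_ A MA.M A).inv ≫ ((MA.e₂ ≫ φ) ⊗ₘ φ) ≫ mN := by
  rw [← id_comp φ, ← tensorHom_comp_tensorHom, ← tensorHom_comp_tensorHom, id_comp, assoc,
    assoc, ← hφ, id_tensorHom, tensorHom_id, reassoc_of% IsMMor.whiskerLeft_comp MA.compat]

variable {mM : MA.M ⊗ MA.M ⟶ MA.M} {i : A ⟶ MA.M}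

lemma whiskerRight_mul_e₁_eq
    (h₁ : (mM ▷ A) ≫ MA.e₁ = (α_ MA.M MA.M A).hom ≫ (MA.M ◁ MA.e₁) ≫ MA.e₁)
    (hi₁ : m = (i ▷ A) ≫ MA.e₁) :
    (((i ▷ MA.M) ≫ mM) ▷ A) ≫ MA.e₁ = ((MA.e₂ ≫ i) ▷ A) ≫ MA.e₁ := by
  rw [comp_whiskerRight, assoc, h₁, associator_naturality_left_assoc, ← whisker_exchange_assoc,
    ← hi₁, ← MA.compat, comp_whiskerRight_assoc, ← hi₁]

lemma whiskerLeft_mul_e₂_whiskerRight_eq (hA : SgAssoc A m)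
    (h₂ : (A ◁ mM) ≫ MA.e₂ = (α_ A MA.M MA.M).inv ≫ (MA.e₂ ▷ MA.M) ≫ MA.e₂)
    (hi₂ : m = (A ◁ i) ≫ MA.e₂) :
    (((A ◁ ((i ▷ MA.M) ≫ mM)) ≫ MA.e₂) ▷ A) ≫ m
      = (((A ◁ (MA.e₂ ≫ i)) ≫ MA.e₂) ▷ A) ≫ m := by
  have hL : (A ◁ ((i ▷ MA.M) ≫ mM)) ≫ MA.e₂ = (α_ A A MA.M).inv ≫ (m ▷ MA.M) ≫ MA.e₂ := by
    rw [MonoidalCategory.whiskerLeft_comp_assoc, h₂, associator_inv_naturality_middle_assoc,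
      ← comp_whiskerRight_assoc, ← hi₂]
  rw [hL, MonoidalCategory.whiskerLeft_comp_assoc, ← hi₂, comp_whiskerRight, comp_whiskerRight,
    comp_whiskerRight, assoc, assoc, assoc, MA.compat, hA, associator_naturality_left_assoc,
    ← whisker_exchange_assoc, hA, associator_naturality_middle_assoc,
    ← MonoidalCategory.whiskerLeft_comp_assoc, MA.compat]
  monoidal

/-- `i(a) y` and `i(a y)` need not agree when `A` is degenerate; they do after right
multiplication by `i(a')`. -/
lemma whiskerRight_mul_tensorHom_mul (hA : SgAssoc A m)
    (h₁ : (mM ▷ A) ≫ MA.e₁ = (α_ MA.M MA.M A).hom ≫ (MA.M ◁ MA.e₁) ≫ MA.e₁)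
    (h₂ : (A ◁ mM) ≫ MA.e₂ = (α_ A MA.M MA.M).inv ≫ (MA.e₂ ▷ MA.M) ≫ MA.e₂)
    (hi₁ : m = (i ▷ A) ≫ MA.e₁) (hi₂ : m = (A ◁ i) ≫ MA.e₂) :
    (((i ▷ MA.M) ≫ mM) ⊗ₘ i) ≫ mM = ((MA.e₂ ≫ i) ⊗ₘ i) ≫ mM := by
  refine MA.hom_ext ?_ ?_
  · rw [MA.whiskerRight_tensorHom_mul_e₁ h₁, MA.whiskerRight_tensorHom_mul_e₁ h₁,
      MA.whiskerRight_mul_e₁_eq h₁ hi₁]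
  · rw [MA.whiskerLeft_tensorHom_mul_e₂ h₂, MA.whiskerLeft_tensorHom_mul_e₂ h₂, ← hi₂,
      MA.whiskerLeft_mul_e₂_whiskerRight_eq hA h₂ hi₂]

end Semigroup

section Dense
variable {A B : C} {mA : A ⊗ A ⟶ A} {mB : B ⊗ B ⟶ B} (MB : MultiplierMonoid B mB)
  {mM : MB.M ⊗ MB.M ⟶ MB.M} {g : A ⟶ MB.M}

lemma mul_comp_of_mult₂ (hnd : NonDeg B mB)
    (h₂ : (B ◁ mM) ≫ MB.e₂ = (α_ B MB.M MB.M).inv ≫ (MB.e₂ ▷ MB.M) ≫ MB.e₂)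
    (hg : Mult₂ mA ((B ◁ g) ≫ MB.e₂)) : mA ≫ g = (g ⊗ₘ g) ≫ mM :=
  MB.hom_ext_of_e₂ hnd <| by
    rw [MB.whiskerLeft_tensorHom_mul_e₂ h₂, ← hg, MonoidalCategory.whiskerLeft_comp_assoc,
      Iso.inv_hom_id_assoc]

lemma dense_mul_left_cancel (QD : QData C) (hnd : NonDeg B mB)
    (h₂ : (B ◁ mM) ≫ MB.e₂ = (α_ B MB.M MB.M).inv ≫ (MB.e₂ ▷ MB.M) ≫ MB.e₂)
    (hg : QD.Q ((B ◁ g) ≫ MB.e₂)) {X : C} {x x' : X ⟶ MB.M}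
    (h : (g ⊗ₘ x) ≫ mM = (g ⊗ₘ x') ≫ mM) : x = x' := by
  refine MB.hom_ext_of_e₂ hnd ?_
  have := QD.epi (QD.whiskerRight_mem hg X)
  have hy : ∀ y : X ⟶ MB.M, (((B ◁ g) ≫ MB.e₂) ▷ X) ≫ (B ◁ y) ≫ MB.e₂
      = (α_ B A X).hom ≫ (B ◁ ((g ⊗ₘ y) ≫ mM)) ≫ MB.e₂ := by
    intro y; rw [MB.whiskerLeft_tensorHom_mul_e₂ h₂, Iso.hom_inv_id_assoc]
  rw [← cancel_epi (((B ◁ g) ≫ MB.e₂) ▷ X), hy, hy, h]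

lemma mul_dense_right_cancel (QD : QData C) (hnd : NonDeg B mB)
    (h₁ : (mM ▷ B) ≫ MB.e₁ = (α_ MB.M MB.M B).hom ≫ (MB.M ◁ MB.e₁) ≫ MB.e₁)
    (hg : QD.Q ((g ▷ B) ≫ MB.e₁)) {X : C} {x x' : X ⟶ MB.M}
    (h : (x ⊗ₘ g) ≫ mM = (x' ⊗ₘ g) ≫ mM) : x = x' := by
  refine MB.hom_ext_of_e₁ hnd ?_
  have := QD.epi (QD.whiskerLeft_mem X hg)
  have hy : ∀ y : X ⟶ MB.M, (X ◁ ((g ▷ B) ≫ MB.e₁)) ≫ (y ▷ B) ≫ MB.e₁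
      = (α_ X A B).inv ≫ (((y ⊗ₘ g) ≫ mM) ▷ B) ≫ MB.e₁ := by
    intro y; rw [MB.whiskerRight_tensorHom_mul_e₁ h₁, Iso.inv_hom_id_assoc]
  rw [← cancel_epi (X ◁ ((g ▷ B) ≫ MB.e₁)), hy, hy, h]

end Dense

end MultiplierMonoid

section Extension
variable (QD : QData C) {A B : C} {mA : A ⊗ A ⟶ A} {mB : B ⊗ B ⟶ B}
  (MA : MultiplierMonoid A mA) (MB : MultiplierMonoid B mB) {mMA : MA.M ⊗ MA.M ⟶ MA.M}
  {mMB : MB.M ⊗ MB.M ⟶ MB.M} {g : A ⟶ MB.M} {t : MA.M ⟶ MB.M}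

theorem exists_tensorHom_mul_eq_e₂_comp (hnd : NonDeg B mB)
    (h₂ : (B ◁ mMB) ≫ MB.e₂ = (α_ B MB.M MB.M).inv ≫ (MB.e₂ ▷ MB.M) ≫ MB.e₂)
    (hgd₁ : QD.Q ((g ▷ B) ≫ MB.e₁)) (hgd₂ : QD.Q ((B ◁ g) ≫ MB.e₂))
    (hg : mA ≫ g = (g ⊗ₘ g) ≫ mMB) :
    ∃ t : MA.M ⟶ MB.M, (g ⊗ₘ t) ≫ mMB = MA.e₂ ≫ g := by
  -- in elements: `(b' g(a')) (g(y a) b) = (b' g(a' y)) (g(a) b)`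
  have key : (((B ◁ g) ≫ MB.e₂) ⊗ₘ ((α_ MA.M A B).inv ≫ ((MA.e₁ ≫ g) ▷ B) ≫ MB.e₁)) ≫ mB
      = (α_ (B ⊗ A) MA.M (A ⊗ B)).inv
        ≫ (((α_ B A MA.M).hom ≫ (B ◁ (MA.e₂ ≫ g)) ≫ MB.e₂) ⊗ₘ ((g ▷ B) ≫ MB.e₁)) ≫ mB := by
    rw [← whiskerLeft_comp_tensorHom _ (α_ MA.M A B).inv,
      ← whiskerRight_comp_tensorHom (α_ B A MA.M).hom, assoc, assoc,
      MB.e₂_tensor_e₁_mul h₂, MB.e₂_tensor_e₁_mul h₂, MA.tensorHom_e₁_comp_mul hg]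
    monoidal
  obtain ⟨f₁, f₂, -, hf₂, hf⟩ := exists_isMMor_of_dense QD hnd hgd₂ hgd₁ key
  obtain ⟨t, ⟨-, ht⟩, -⟩ := MB.lift f₁ f₂ hf
  refine ⟨t, MB.hom_ext_of_e₂ hnd ?_⟩
  rw [MB.whiskerLeft_tensorHom_mul_e₂ h₂, ← ht, hf₂, Iso.inv_hom_id_assoc,
    MonoidalCategory.whiskerLeft_comp_assoc]

lemma mul_comp_eq_of_tensorHom_mul_eq (hnd : NonDeg B mB)
    (h₂A : (A ◁ mMA) ≫ MA.e₂ = (α_ A MA.M MA.M).inv ≫ (MA.e₂ ▷ MA.M) ≫ MA.e₂)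
    (h₂B : (B ◁ mMB) ≫ MB.e₂ = (α_ B MB.M MB.M).inv ≫ (MB.e₂ ▷ MB.M) ≫ MB.e₂)
    (hgd₂ : QD.Q ((B ◁ g) ≫ MB.e₂)) (ht : (g ⊗ₘ t) ≫ mMB = MA.e₂ ≫ g) :
    mMA ≫ t = (t ⊗ₘ t) ≫ mMB := by
  refine MB.dense_mul_left_cancel QD hnd h₂B hgd₂ ?_
  calc (g ⊗ₘ (mMA ≫ t)) ≫ mMB
      = (α_ A MA.M MA.M).inv ≫ ((MA.e₂ ≫ g) ⊗ₘ t) ≫ mMB := by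
        rw [← whiskerRight_comp_tensorHom_assoc, ← whiskerLeft_comp_tensorHom_assoc, ht,
          reassoc_of% h₂A]
    _ = (α_ A MA.M MA.M).inv ≫ ((g ⊗ₘ t) ⊗ₘ t) ≫ (mMB ▷ MB.M) ≫ mMB := by
        rw [tensorHom_comp_whiskerRight_assoc, ht]
    _ = (g ⊗ₘ ((t ⊗ₘ t) ≫ mMB)) ≫ mMB := by
        rw [MB.sgAssoc hnd h₂B, associator_naturality_assoc, Iso.inv_hom_id_assoc,
          tensorHom_comp_whiskerLeft_assoc]

lemma unit_comp_eq_of_tensorHom_mul_eq (hnd : NonDeg B mB)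
    (h₂B : (B ◁ mMB) ≫ MB.e₂ = (α_ B MB.M MB.M).inv ≫ (MB.e₂ ▷ MB.M) ≫ MB.e₂)
    (hgd₂ : QD.Q ((B ◁ g) ≫ MB.e₂)) {uA : 𝟙_ C ⟶ MA.M} {uB : 𝟙_ C ⟶ MB.M}
    (huA : (ρ_ A).inv ≫ (A ◁ uA) ≫ MA.e₂ = 𝟙 A)
    (huB : (ρ_ B).inv ≫ (B ◁ uB) ≫ MB.e₂ = 𝟙 B)
    (ht : (g ⊗ₘ t) ≫ mMB = MA.e₂ ≫ g) : uA ≫ t = uB := by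
  refine MB.dense_mul_left_cancel QD hnd h₂B hgd₂ ?_
  have huA' : (A ◁ uA) ≫ MA.e₂ = (ρ_ A).hom := by simpa using (Iso.inv_comp_eq _).1 huA
  rw [← whiskerLeft_comp_tensorHom_assoc, ht, reassoc_of% huA', MonoidalCategory.tensorHom_def,
    assoc, MB.whiskerLeft_unit_mul hnd h₂B huB, rightUnitor_naturality]

lemma comp_eq_of_tensorHom_mul_eq (hnd : NonDeg B mB)
    (h₂B : (B ◁ mMB) ≫ MB.e₂ = (α_ B MB.M MB.M).inv ≫ (MB.e₂ ▷ MB.M) ≫ MB.e₂)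
    (hgd₂ : QD.Q ((B ◁ g) ≫ MB.e₂)) {i : A ⟶ MA.M} (hi₂ : mA = (A ◁ i) ≫ MA.e₂)
    (hg : mA ≫ g = (g ⊗ₘ g) ≫ mMB) (ht : (g ⊗ₘ t) ≫ mMB = MA.e₂ ≫ g) : i ≫ t = g :=
  MB.dense_mul_left_cancel QD hnd h₂B hgd₂ <| by
    rw [← whiskerLeft_comp_tensorHom_assoc, ht, ← reassoc_of% hi₂, hg]

lemma tensorHom_mul_eq_of_mul_comp (hnd : NonDeg B mB) (hA : SgAssoc A mA)
    (h₁A : (mMA ▷ A) ≫ MA.e₁ = (α_ MA.M MA.M A).hom ≫ (MA.M ◁ MA.e₁) ≫ MA.e₁)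
    (h₂A : (A ◁ mMA) ≫ MA.e₂ = (α_ A MA.M MA.M).inv ≫ (MA.e₂ ▷ MA.M) ≫ MA.e₂)
    (h₁B : (mMB ▷ B) ≫ MB.e₁ = (α_ MB.M MB.M B).hom ≫ (MB.M ◁ MB.e₁) ≫ MB.e₁)
    {i : A ⟶ MA.M} (hi₁ : mA = (i ▷ A) ≫ MA.e₁) (hi₂ : mA = (A ◁ i) ≫ MA.e₂)
    (hgd₁ : QD.Q ((g ▷ B) ≫ MB.e₁)) {s : MA.M ⟶ MB.M}
    (hsm : mMA ≫ s = (s ⊗ₘ s) ≫ mMB) (hsi : i ≫ s = g) : (g ⊗ₘ s) ≫ mMB = MA.e₂ ≫ g := by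
  have hs : ∀ {X Y : C} (x : X ⟶ MA.M) (y : Y ⟶ MA.M),
      ((x ⊗ₘ y) ≫ mMA) ≫ s = ((x ≫ s) ⊗ₘ (y ≫ s)) ≫ mMB := by
    intro X Y x y; rw [assoc, hsm, tensorHom_comp_tensorHom_assoc]
  have hgs : (g ⊗ₘ s) ≫ mMB = ((i ▷ MA.M) ≫ mMA) ≫ s := by
    rw [assoc, hsm, whiskerRight_comp_tensorHom_assoc, hsi]
  refine MB.mul_dense_right_cancel QD hnd h₁B hgd₁ ?_
  rw [hgs, ← hsi, ← hs, MA.whiskerRight_mul_tensorHom_mul hA h₁A h₂A hi₁ hi₂, hs, assoc]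

end Extension

theorem extend_to_multiplierMonoid_general
    (QD : QData C) {A B : C} (mA : A ⊗ A ⟶ A) (mB : B ⊗ B ⟶ B)
    (hA : SgAssoc A mA) (hndB : NonDeg B mB)
    (MA : MultiplierMonoid A mA) (MB : MultiplierMonoid B mB)
    (mMA : MA.M ⊗ MA.M ⟶ MA.M) (uA : 𝟙_ C ⟶ MA.M)
    (h1A : (mMA ▷ A) ≫ MA.e₁ = (α_ MA.M MA.M A).hom ≫ (MA.M ◁ MA.e₁) ≫ MA.e₁)
    (h2A : (A ◁ mMA) ≫ MA.e₂ = (α_ A MA.M MA.M).inv ≫ (MA.e₂ ▷ MA.M) ≫ MA.e₂)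
    (huA2 : (ρ_ A).inv ≫ (A ◁ uA) ≫ MA.e₂ = 𝟙 A)
    (mMB : MB.M ⊗ MB.M ⟶ MB.M) (uB : 𝟙_ C ⟶ MB.M)
    (h1B : (mMB ▷ B) ≫ MB.e₁ = (α_ MB.M MB.M B).hom ≫ (MB.M ◁ MB.e₁) ≫ MB.e₁)
    (h2B : (B ◁ mMB) ≫ MB.e₂ = (α_ B MB.M MB.M).inv ≫ (MB.e₂ ▷ MB.M) ≫ MB.e₂)
    (huB2 : (ρ_ B).inv ≫ (B ◁ uB) ≫ MB.e₂ = 𝟙 B)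
    (i : A ⟶ MA.M) (hi₁ : mA = (i ▷ A) ≫ MA.e₁) (hi₂ : mA = (A ◁ i) ≫ MA.e₂)
    (g : A ⟶ MB.M)
    (hgd₁ : QD.Q ((g ▷ B) ≫ MB.e₁)) (hgd₂ : QD.Q ((B ◁ g) ≫ MB.e₂))
    (hgm₂ : Mult₂ mA ((B ◁ g) ≫ MB.e₂)) :
    ∃! t : MA.M ⟶ MB.M,
      (mMA ≫ t = (t ⊗ₘ t) ≫ mMB) ∧ (uA ≫ t = uB) ∧ (i ≫ t = g) := by
  have hg : mA ≫ g = (g ⊗ₘ g) ≫ mMB := MB.mul_comp_of_mult₂ hndB h2B hgm₂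
  obtain ⟨t, ht⟩ := exists_tensorHom_mul_eq_e₂_comp QD MA MB hndB h2B hgd₁ hgd₂ hg
  refine ⟨t, ⟨mul_comp_eq_of_tensorHom_mul_eq QD MA MB hndB h2A h2B hgd₂ ht,
    unit_comp_eq_of_tensorHom_mul_eq QD MA MB hndB h2B hgd₂ huA2 huB2 ht,
    comp_eq_of_tensorHom_mul_eq QD MA MB hndB h2B hgd₂ hi₂ hg ht⟩, ?_⟩
  rintro s ⟨hsm, -, hsi⟩
  have hs := tensorHom_mul_eq_of_mul_comp QD MA MB hndB hA h1A h2A h1B hi₁ hi₂ hgd₁ hsm hsi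
  exact MB.dense_mul_left_cancel QD hndB h2B hgd₂ (hs.trans ht.symm)

/-- Proposition 3.6: for semigroups `A`, `B` with `B` non-degenerate, every dense and
multiplicative morphism `g : A ⟶ 𝕄(B)` extends uniquely to a monoid morphism
`g̃ : 𝕄(A) ⟶ 𝕄(B)` with `g̃ ∘ i = g`. -/
theorem extend_to_multiplierMonoid [BraidedCategory C] [MonoidalClosed C]
    (QD : QData C) {A B : C} (mA : A ⊗ A ⟶ A) (mB : B ⊗ B ⟶ B)
    (hA : SgAssoc A mA) (hB : SgAssoc B mB) (hndB : NonDeg B mB)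
    (MA : MultiplierMonoid A mA) (MB : MultiplierMonoid B mB)
    (mMA : MA.M ⊗ MA.M ⟶ MA.M) (uA : 𝟙_ C ⟶ MA.M)
    (h1A : (mMA ▷ A) ≫ MA.e₁ = (α_ MA.M MA.M A).hom ≫ (MA.M ◁ MA.e₁) ≫ MA.e₁)
    (h2A : (A ◁ mMA) ≫ MA.e₂ = (α_ A MA.M MA.M).inv ≫ (MA.e₂ ▷ MA.M) ≫ MA.e₂)
    (huA1 : (λ_ A).inv ≫ (uA ▷ A) ≫ MA.e₁ = 𝟙 A)
    (huA2 : (ρ_ A).inv ≫ (A ◁ uA) ≫ MA.e₂ = 𝟙 A)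
    (mMB : MB.M ⊗ MB.M ⟶ MB.M) (uB : 𝟙_ C ⟶ MB.M)
    (h1B : (mMB ▷ B) ≫ MB.e₁ = (α_ MB.M MB.M B).hom ≫ (MB.M ◁ MB.e₁) ≫ MB.e₁)
    (h2B : (B ◁ mMB) ≫ MB.e₂ = (α_ B MB.M MB.M).inv ≫ (MB.e₂ ▷ MB.M) ≫ MB.e₂)
    (huB1 : (λ_ B).inv ≫ (uB ▷ B) ≫ MB.e₁ = 𝟙 B)
    (huB2 : (ρ_ B).inv ≫ (B ◁ uB) ≫ MB.e₂ = 𝟙 B)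
    (i : A ⟶ MA.M) (hi₁ : mA = (i ▷ A) ≫ MA.e₁) (hi₂ : mA = (A ◁ i) ≫ MA.e₂)
    (g : A ⟶ MB.M)
    (hgd₁ : QD.Q ((g ▷ B) ≫ MB.e₁)) (hgd₂ : QD.Q ((B ◁ g) ≫ MB.e₂))
    (hgm₁ : Mult₁ mA ((g ▷ B) ≫ MB.e₁)) (hgm₂ : Mult₂ mA ((B ◁ g) ≫ MB.e₂)) :
    ∃! t : MA.M ⟶ MB.M,
      (mMA ≫ t = (t ⊗ₘ t) ≫ mMB) ∧ (uA ≫ t = uB) ∧ (i ≫ t = g) :=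
  extend_to_multiplierMonoid_general QD mA mB hA hndB MA MB mMA uA h1A h2A huA2 mMB uB h1B h2B huB2
    i hi₁ hi₂ g hgd₁ hgd₂ hgm₂
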